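/- Let 0 < a < b < ∞ and α, β ∈ ℝ. There exists a radially symmetric C² function u on the closed annulus {a ≤ |x| ≤ b} ⊂ ℝ² with both eigenvalues of A^u nonnegative, the determinant of A^u identically zero (i.e., λ(A^u) ∈ ∂Γ₂), u = α on |x| = a, and u = β on |x| = b, if and only if 0 ≤ α - β ≤ 4·ln(b/a). -/

import Mathlib

/-!
`λ₂ ≥ 0` says `u'(4 + r u') ≤ 0`, i.e. `-4/r ≤ u' ≤ 0`: so `u` decreases while `u + 4 log r`
increases, which gives `0 ≤ α - β ≤ 4 log (b/a)`. Conversely, the functions with `e^{-u/4}`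
affine satisfy `λ₁ = 0`, and the one with the prescribed boundary values has `λ₂ ≥ 0`
exactly when `α - β` lies in that range.
-/

/-- First eigenvalue of A^u for a radially symmetric function u(r). -/
noncomputable def lam1 (u : ℝ → ℝ) (r : ℝ) : ℝ :=
  (1 / (4 * Real.exp (u r))) * ((deriv u r) ^ 2 - 4 * deriv (deriv u) r)

/-- Second eigenvalue of A^u for a radially symmetric function u(r). -/
noncomputable def lam2 (u : ℝ → ℝ) (r : ℝ) : ℝ :=
  -(1 / (4 * Real.exp (u r) * r)) * (deriv u r) * (4 + r * deriv u r)

def GammaP (p : ℝ) : Set (ℝ × ℝ) := {l | l.2 > (p - 2) * l.1 ∧ l.1 > (p - 2) * l.2}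

open Real Set

theorem lam2_nonneg_iff {u : ℝ → ℝ} {r : ℝ} (hr : 0 < r) :
    0 ≤ lam2 u r ↔ deriv u r * (4 + r * deriv u r) ≤ 0 := by
  have hc : 0 < 4 * exp (u r) * r := by positivity
  rw [show lam2 u r = -(deriv u r * (4 + r * deriv u r) / (4 * exp (u r) * r)) by
    rw [lam2]; ring, neg_nonneg, div_le_iff₀ hc, zero_mul]

theorem nonpos_and_add_four_div_nonneg_of_mul_nonpos {r d : ℝ} (hr : 0 < r)
    (h : d * (4 + r * d) ≤ 0) : d ≤ 0 ∧ 0 ≤ d + 4 / r := by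
  have hd : d ≤ 0 := by
    by_contra! hd
    nlinarith [mul_pos hr hd]
  have h4 : 0 ≤ 4 + r * d := by
    by_contra! h4
    nlinarith
  refine ⟨hd, ?_⟩
  rw [show d + 4 / r = (4 + r * d) / r by field_simp; ring]
  positivity

section Necessity

variable {u : ℝ → ℝ} {a b : ℝ}

theorem antitoneOn_of_lam2_nonneg (ha : 0 < a) (hc : ContinuousOn u (Icc a b))
    (hd : DifferentiableOn ℝ u (Ioo a b)) (h : ∀ r ∈ Ioo a b, 0 ≤ lam2 u r) :
    AntitoneOn u (Icc a b) := by
  refine antitoneOn_of_deriv_nonpos (convex_Icc a b) hc (by rwa [interior_Icc]) fun r hr => ?_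
  rw [interior_Icc] at hr
  have hr0 : 0 < r := ha.trans hr.1
  exact (nonpos_and_add_four_div_nonneg_of_mul_nonpos hr0 ((lam2_nonneg_iff hr0).1 (h r hr))).1

theorem monotoneOn_add_four_mul_log_of_lam2_nonneg (ha : 0 < a) (hc : ContinuousOn u (Icc a b))
    (hd : DifferentiableOn ℝ u (Ioo a b)) (h : ∀ r ∈ Ioo a b, 0 ≤ lam2 u r) :
    MonotoneOn (fun r => u r + 4 * log r) (Icc a b) := by
  have hpos : ∀ r ∈ Icc a b, 0 < r := fun r hr => ha.trans_le hr.1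
  have hderiv : ∀ r ∈ Ioo a b, HasDerivAt (fun r => u r + 4 * log r) (deriv u r + 4 / r) r := by
    intro r hr
    have hu := ((hd r hr).differentiableAt (Ioo_mem_nhds hr.1 hr.2)).hasDerivAt
    rw [div_eq_mul_inv]
    exact hu.add ((hasDerivAt_log (hpos r (Ioo_subset_Icc_self hr)).ne').const_mul 4)
  refine monotoneOn_of_deriv_nonneg (convex_Icc a b)
    (hc.add (continuousOn_const.mul (continuousOn_log.mono fun r hr => (hpos r hr).ne')))
    (by rw [interior_Icc]; exact fun r hr => (hderiv r hr).differentiableAt.differentiableWithinAt)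
    fun r hr => ?_
  rw [interior_Icc] at hr
  have hr0 : 0 < r := ha.trans hr.1
  rw [(hderiv r hr).deriv]
  exact (nonpos_and_add_four_div_nonneg_of_mul_nonpos hr0 ((lam2_nonneg_iff hr0).1 (h r hr))).2

theorem sub_nonneg_and_le_four_mul_log_of_lam2_nonneg (ha : 0 < a) (hab : a ≤ b)
    (hc : ContinuousOn u (Icc a b)) (hd : DifferentiableOn ℝ u (Ioo a b))
    (h : ∀ r ∈ Ioo a b, 0 ≤ lam2 u r) :
    0 ≤ u a - u b ∧ u a - u b ≤ 4 * log (b / a) := by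
  have ha' : a ∈ Icc a b := left_mem_Icc.2 hab
  have hb' : b ∈ Icc a b := right_mem_Icc.2 hab
  have hanti := antitoneOn_of_lam2_nonneg ha hc hd h ha' hb' hab
  have hmono := monotoneOn_add_four_mul_log_of_lam2_nonneg ha hc hd h ha' hb' hab
  rw [log_div (ha.trans_le hab).ne' ha.ne']
  constructor <;> dsimp only at hmono <;> linarith

end Necessity

section LogProfile

variable {c p q s : ℝ}

/-- `e^{-u/4}` is affine for `u = logProfile c p q`; since `λ₁(u) = (4 / e^{3u/4}) (e^{-u/4})''`,
these are exactly the solutions of `λ₁ = 0`, and `λ₂ ≥ 0` then amounts to `p, q ≥ 0`. -/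
noncomputable def logProfile (c p q : ℝ) (s : ℝ) : ℝ := c - 4 * log (p * s + q)

theorem hasDerivAt_logProfile (hs : 0 < p * s + q) :
    HasDerivAt (logProfile c p q) (-4 * p / (p * s + q)) s := by
  refine (((((hasDerivAt_id' s).const_mul p).add_const q).log hs.ne').const_mul 4).const_sub c
    |>.congr_deriv ?_
  ring

theorem deriv_deriv_logProfile (hs : 0 < p * s + q) :
    deriv (deriv (logProfile c p q)) s = 4 * p ^ 2 / (p * s + q) ^ 2 := by
  have hev : deriv (logProfile c p q) =ᶠ[nhds s] fun x => -4 * p * (p * x + q)⁻¹ := by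
    have hopen : IsOpen {x : ℝ | 0 < p * x + q} := isOpen_lt continuous_const (by fun_prop)
    filter_upwards [hopen.mem_nhds hs] with x hx
    rw [(hasDerivAt_logProfile hx).deriv, div_eq_mul_inv]
  rw [hev.deriv_eq]
  have : HasDerivAt (fun x => -4 * p * (p * x + q)⁻¹) (4 * p ^ 2 / (p * s + q) ^ 2) s := by
    refine ((((hasDerivAt_id' s).const_mul p).add_const q).inv hs.ne').const_mul (-4 * p)
      |>.congr_deriv ?_
    ring
  exact this.deriv

theorem contDiffAt_logProfile (hs : 0 < p * s + q) : ContDiffAt ℝ 2 (logProfile c p q) s := by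
  unfold logProfile
  fun_prop (disch := exact hs.ne')

theorem lam1_logProfile (hs : 0 < p * s + q) : lam1 (logProfile c p q) s = 0 := by
  have hs' := hs.ne'
  rw [lam1, (hasDerivAt_logProfile hs).deriv, deriv_deriv_logProfile hs]
  field_simp
  ring

theorem lam2_logProfile (hs : 0 < p * s + q) (hs0 : s ≠ 0) :
    lam2 (logProfile c p q) s = 4 * p * q / (exp (logProfile c p q s) * s * (p * s + q) ^ 2) := by
  have hs' := hs.ne'
  have h4 : 4 + s * (-4 * p / (p * s + q)) = 4 * q / (p * s + q) := by
    rw [eq_div_iff hs', add_mul, mul_assoc, div_mul_cancel₀ _ hs']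
    ring
  rw [lam2, (hasDerivAt_logProfile hs).deriv, h4]
  field_simp

end LogProfile

theorem exists_logProfile_boundary_values {a b α β : ℝ} (ha : 0 < a) (hab : a < b)
    (h0 : 0 ≤ α - β) (h1 : α - β ≤ 4 * log (b / a)) :
    ∃ p q : ℝ, 0 ≤ p ∧ 0 ≤ q ∧ p * a + q = 1 ∧
      logProfile α p q a = α ∧ logProfile α p q b = β := by
  set t := exp ((α - β) / 4) with ht
  have hba : 0 < b - a := sub_pos.2 hab
  have ht1 : 1 ≤ t := one_le_exp (by linarith)
  have htb : t * a ≤ b := by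
    rw [← le_div_iff₀ ha, ← exp_log (div_pos (ha.trans hab) ha)]
    exact exp_le_exp.2 (by linarith)
  set p := (t - 1) / (b - a)
  have hpb : p * b + (1 - p * a) = t := by
    simp only [p]
    field_simp
    ring
  refine ⟨p, 1 - p * a, div_nonneg (by linarith) hba.le, ?_, by ring, ?_, ?_⟩
  · rw [sub_nonneg, div_mul_eq_mul_div, div_le_one hba]
    linarith
  · simp [logProfile]
  · rw [logProfile, hpb, ht, log_exp]
    ring

theorem stmt9 (a b α β : ℝ) (ha : 0 < a) (hab : a < b) :
    (∃ u : ℝ → ℝ, ContDiffOn ℝ 2 u (Set.Icc a b) ∧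
      (∀ r ∈ Set.Ioo a b, 0 ≤ lam1 u r ∧ 0 ≤ lam2 u r ∧ lam1 u r * lam2 u r = 0) ∧
      u a = α ∧ u b = β) ↔
    (0 ≤ α - β ∧ α - β ≤ 4 * Real.log (b / a)) := by
  constructor
  · rintro ⟨u, hu, hlam, rfl, rfl⟩
    exact sub_nonneg_and_le_four_mul_log_of_lam2_nonneg ha hab.le hu.continuousOn
      ((hu.differentiableOn two_ne_zero).mono Ioo_subset_Icc_self) fun r hr => (hlam r hr).2.1
  · rintro ⟨h0, h1⟩
    obtain ⟨p, q, hp, hq, hpq, hua, hub⟩ := exists_logProfile_boundary_values ha hab h0 h1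
    have hpos : ∀ s ∈ Icc a b, 0 < p * s + q := fun s hs => by
      linarith [mul_le_mul_of_nonneg_left hs.1 hp]
    refine ⟨logProfile α p q, fun s hs => (contDiffAt_logProfile (hpos s hs)).contDiffWithinAt,
      fun r hr => ?_, hua, hub⟩
    have hr0 : 0 < r := ha.trans hr.1
    have hr := hpos r (Ioo_subset_Icc_self hr)
    rw [lam1_logProfile hr, lam2_logProfile hr hr0.ne', zero_mul]
    exact ⟨le_rfl, by positivity, rfl⟩
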